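/- arXiv:2403.01331 — 4 statements merged into one kernel-verified Lean document; each statement's English description precedes it below -/
import Mathlib

section
/- Tutte's 1-factor theorem: A finite simple graph G has a perfect matching if and only if for every subset S of vertices, the number of connected components of G − S with an odd number of vertices is at most the cardinality of S. -/
open SimpleGraph

section TutteAux
variable {V : Type*} {G : SimpleGraph V}

lemma exists_pm_of_involution (f : V → V) (hinv : ∀ v, f (f v) = v)
    (hadj : ∀ v, G.Adj v (f v)) :
    ∃ M : G.Subgraph, M.IsPerfectMatching := by
  refine ⟨⟨Set.univ, fun v w => f v = w, ?_, fun _ => trivial, ?_⟩,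
    fun v _ => ⟨f v, rfl, fun y hy => Eq.symm hy⟩, fun v => trivial⟩
  · rintro v w rfl; exact hadj v
  · refine ⟨?_⟩; rintro v w rfl; exact hinv v

lemma pm_to_involution {M : G.Subgraph} (hM : M.IsPerfectMatching) :
    ∃ f : V → V, (∀ v, f (f v) = v) ∧ (∀ v, M.Adj v (f v)) := by
  choose f hf1 hf2 using fun v => hM.1 (hM.2 v)
  exact ⟨f, fun v => (hf2 (f v) v (hf1 v).symm).symm, hf1⟩

lemma sup_edge_adj_cases {a b v w : V} (h : (G ⊔ edge a b).Adj v w) :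
    G.Adj v w ∨ (v = a ∧ w = b) ∨ (v = b ∧ w = a) := by
  rcases h with h | h
  · exact Or.inl h
  · rw [edge_adj] at h; tauto

lemma tutte_core [Finite V] {x a b c : V}
    (hxa : G.Adj x a) (hxb : G.Adj x b) (hab : ¬ G.Adj a b) (hxc : ¬ G.Adj x c)
    (hnab : a ≠ b) (hnxc : x ≠ c)
    {f g : V → V}
    (hfinv : ∀ v, f (f v) = v) (hginv : ∀ v, g (g v) = v)
    (hf : ∀ v, (G ⊔ edge a b).Adj v (f v)) (hg : ∀ v, (G ⊔ edge x c).Adj v (g v)) :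
    ∃ M : G.Subgraph, M.IsPerfectMatching := by
  classical
  have hfne : ∀ v, f v ≠ v := fun v => (hf v).ne'
  have hgne : ∀ v, g v ≠ v := fun v => (hg v).ne'
  -- Case 1: f avoids the edge ab entirely
  by_cases hfa : f a = b
  case neg =>
    refine exists_pm_of_involution f hfinv (fun v => ?_)
    rcases sup_edge_adj_cases (hf v) with h | ⟨rfl, h⟩ | ⟨rfl, h⟩
    · exact h
    · exact absurd h hfa
    · exact absurd (by rw [← h, hfinv]) hfa
  -- Case 2: g avoids the edge xc entirely
  by_cases hgx : g x = c
  case neg =>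
    refine exists_pm_of_involution g hginv (fun v => ?_)
    rcases sup_edge_adj_cases (hg v) with h | ⟨rfl, h⟩ | ⟨rfl, h⟩
    · exact h
    · exact absurd h hgx
    · exact absurd (by rw [← h, hginv]) hgx
  have hfb : f b = a := by rw [← hfa, hfinv]
  have hgc : g c = x := by rw [← hgx, hginv]
  -- the alternating trajectory starting at x
  set w : ℕ → V := fun n => Nat.rec x (fun k wk => if Even k then g wk else f wk) n with hw
  have hw0 : w 0 = x := rfl
  have hwse : ∀ k, Even k → w (k+1) = g (w k) := fun k hk => by simp [hw, hk]
  have hwso : ∀ k, ¬ Even k → w (k+1) = f (w k) := fun k hk => by simp [hw, hk]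
  -- incoming edges
  have hgback : ∀ k, Even k → g (w (k+1)) = w k := fun k hk => by
    rw [hwse k hk, hginv]
  have hfback : ∀ k, ¬ Even k → f (w (k+1)) = w k := fun k hk => by
    rw [hwso k hk, hfinv]
  -- no collisions of opposite parity
  have hopp : ∀ t i, w (i + (2*t+1)) ≠ w i := by
    intro t
    induction t with
    | zero =>
      intro i h
      simp only [mul_zero, zero_add] at h
      by_cases hi : Even i
      · exact hgne (w i) (by rw [← hwse i hi, h])
      · exact hfne (w i) (by rw [← hwso i hi, h])
    | succ n ih =>
      intro i h
      apply ih (i+1)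
      rw [show i + (2*(n+1)+1) = (i + (2*n+2)) + 1 by ring] at h
      rw [show i + 1 + (2*n+1) = i + (2*n+2) by ring]
      by_cases hi : Even i
      · have hke : Even (i + (2*n+2)) := by simp [parity_simps, hi]
        rw [hwse _ hke] at h
        rw [hwse i hi, ← h, hginv]
      · have hko : ¬ Even (i + (2*n+2)) := by simp [parity_simps, hi]
        rw [hwso _ hko] at h
        rw [hwso i hi, ← h, hfinv]
  -- backward propagation of same-parity collisions
  have hback : ∀ (d : ℕ), Even d → ∀ i, w (i + d) = w i → w d = x := by
    intro d hd i
    induction i with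
    | zero => intro h; rw [← hw0]; simpa using h
    | succ n ih =>
      intro h
      apply ih
      by_cases hn : Even n
      · have hnd : Even (n + d) := hn.add hd
        rw [show n + 1 + d = (n + d) + 1 by ring, hwse _ hnd, hwse _ hn] at h
        rw [← hginv (w (n+d)), h, hginv]
      · have hnd : ¬ Even (n + d) := by simp [parity_simps] at hn ⊢; simpa [hd] using hn
        rw [show n + 1 + d = (n + d) + 1 by ring, hwso _ hnd, hwso _ hn] at h
        rw [← hfinv (w (n+d)), h, hfinv]
  -- periodicity
  have hper : ∀ p, Even p → w p = x → ∀ k, w (k + p) = w k := by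
    intro p hp hpx k
    induction k with
    | zero => simpa [hw0] using hpx
    | succ n ih =>
      by_cases hn : Even n
      · have hnd : Even (n + p) := hn.add hp
        rw [show n + 1 + p = (n + p) + 1 by ring, hwse _ hnd, hwse _ hn, ih]
      · have hnd : ¬ Even (n + p) := by simp [parity_simps] at hn ⊢; simpa [hp] using hn
        rw [show n + 1 + p = (n + p) + 1 by ring, hwso _ hnd, hwso _ hn, ih]
  -- existence of a positive even period
  obtain ⟨p, hp0, hpe, hpx⟩ : ∃ p, 0 < p ∧ Even p ∧ w p = x := by
    have key : ∀ i j, i < j → w j = w i → ∃ p, 0 < p ∧ Even p ∧ w p = x := by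
      intro i j hlt hwij
      have he : Even (j - i) := by
        rcases Nat.even_or_odd (j - i) with he | ho
        · exact he
        · obtain ⟨t, ht⟩ := ho
          exact absurd (by rw [show i + (2*t+1) = j by omega]; exact hwij) (hopp t i)
      exact ⟨j - i, by omega, he, hback _ he i (by rw [show i + (j-i) = j by omega]; exact hwij)⟩
    obtain ⟨i, j, hij, hwij⟩ := Finite.exists_ne_map_eq_of_infinite w
    rcases hij.lt_or_gt with hlt | hlt
    · exact key i j hlt hwij.symm
    · exact key j i hlt hwij
  -- closure of the trajectory under g and f
  have hTg : ∀ k, ∃ j, w j = g (w k) := by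
    intro k
    by_cases hk : Even k
    · exact ⟨k+1, hwse k hk⟩
    · have hk0 : k ≠ 0 := by rintro rfl; exact hk Even.zero
      obtain ⟨k', rfl⟩ : ∃ k', k = k' + 1 := ⟨k - 1, by omega⟩
      exact ⟨k', (hgback k' (by simpa [parity_simps] using hk)).symm⟩
  have hTf : ∀ k, ∃ j, w j = f (w k) := by
    intro k
    by_cases hk : Even k
    · rcases Nat.eq_zero_or_pos k with rfl | hkpos
      · refine ⟨p - 1, ?_⟩
        have hodd : ¬ Even (p - 1) := by
          rw [Nat.even_sub (by omega)]
          simp [hpe]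
        have := hfback (p-1) hodd
        rw [show p - 1 + 1 = p by omega, hpx] at this
        rw [hw0, ← this]
      · obtain ⟨k', rfl⟩ : ∃ k', k = k' + 1 := ⟨k - 1, by omega⟩
        exact ⟨k', (hfback k' (by simpa [parity_simps] using hk)).symm⟩
    · exact ⟨k+1, hwso k hk⟩
  have hw1 : w 1 = c := by rw [show (1:ℕ) = 0 + 1 from rfl, hwse 0 Even.zero, hw0, hgx]
  have hca : c ≠ a := fun h => hxc (h ▸ hxa)
  have hcb : c ≠ b := fun h => hxc (h ▸ hxb)
  by_cases hex : ∃ k, w k = a ∨ w k = b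
  case neg =>
    -- the trajectory avoids {a, b}: use f on it, g off it
    push_neg at hex
    refine exists_pm_of_involution
      (fun v => if v ∈ Set.range w then f v else g v) (fun v => ?_) (fun v => ?_)
    · by_cases hv : v ∈ Set.range w
      · have hfv : f v ∈ Set.range w := by
          obtain ⟨k, rfl⟩ := hv
          obtain ⟨j, hj⟩ := hTf k
          exact ⟨j, hj⟩
        simp only [hv, hfv, if_true]
        exact hfinv v
      · have hgv : g v ∉ Set.range w := by
          intro hgv
          apply hv
          obtain ⟨k, hk⟩ := hgv
          obtain ⟨j, hj⟩ := hTg k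
          exact ⟨j, by rw [hj, hk, hginv]⟩
        simp only [hv, hgv, if_false]
        exact hginv v
    · by_cases hv : v ∈ Set.range w
      · simp only [hv, if_true]
        rcases sup_edge_adj_cases (hf v) with h | ⟨rfl, h⟩ | ⟨rfl, h⟩
        · exact h
        · obtain ⟨k, hk⟩ := hv; exact absurd (Or.inl hk) (not_or.mpr (hex k))
        · obtain ⟨k, hk⟩ := hv; exact absurd (Or.inr hk) (not_or.mpr (hex k))
      · simp only [hv, if_false]
        rcases sup_edge_adj_cases (hg v) with h | ⟨rfl, h⟩ | ⟨rfl, h⟩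
        · exact h
        · exact absurd ⟨0, hw0⟩ hv
        · exact absurd ⟨1, hw1⟩ hv
  -- the trajectory hits {a, b}: rewire along the initial segment
  have hm := Nat.find_spec hex
  set m := Nat.find hex with hmdef
  have hmin : ∀ k, k < m → ¬(w k = a ∨ w k = b) := fun k hk => Nat.find_min hex hk
  have hm0 : m ≠ 0 := by
    rintro h
    rw [h, hw0] at hm
    rcases hm with h' | h'
    · exact hxa.ne h'
    · exact hxb.ne h'
  have hm1 : m ≠ 1 := by
    rintro h
    rw [h, hw1] at hm
    rcases hm with h' | h'
    · exact hca h'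
    · exact hcb h'
  have hmodd : ¬ Even m := by
    intro hme
    have h2 : 2 ≤ m := by omega
    have hoddm1 : ¬ Even (m - 1) := by
      rw [Nat.even_sub (by omega)]
      simp [hme]
    have := hfback (m - 1) hoddm1
    rw [show m - 1 + 1 = m by omega] at this
    apply hmin (m - 1) (by omega)
    rcases hm with h' | h'
    · right; rw [← this, h', hfa]
    · left; rw [← this, h', hfb]
  -- injectivity of the initial segment
  have hinj : ∀ i, i ≤ m → ∀ j, j ≤ m → w i = w j → i = j := by
    have key : ∀ i j, i < j → j ≤ m → w i ≠ w j := by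
      intro i j hlt hle heq
      have hd : Even (j - i) := by
        rcases Nat.even_or_odd (j - i) with he | ho
        · exact he
        · obtain ⟨t, ht⟩ := ho
          exact absurd (show w (i + (2*t+1)) = w i by
            rw [show i + (2*t+1) = j by omega]; exact heq.symm) (hopp t i)
      have hdx : w (j - i) = x := hback _ hd i (by rw [show i + (j-i) = j by omega]; exact heq.symm)
      have := hper _ hd hdx (m - (j - i))
      rw [show m - (j - i) + (j - i) = m by omega] at this
      exact hmin (m - (j-i)) (by omega) (this ▸ hm)
    intro i hi j hj heq
    rcases lt_trichotomy i j with h | h | h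
    · exact absurd heq (key i j h hj)
    · exact h
    · exact absurd heq.symm (key j i h hi)
  have hxm : x ≠ w m := by
    intro h
    apply hm0
    exact hinj m (le_refl m) 0 (Nat.zero_le m) (by rw [hw0, ← h])
  set Mid : Set V := {v | ∃ i, 0 < i ∧ i < m ∧ w i = v} with hMid
  set P : Set V := {v | ∃ i, i ≤ m ∧ w i = v} with hP
  have hMidP : Mid ⊆ P := by rintro v ⟨i, h1, h2, h3⟩; exact ⟨i, by omega, h3⟩
  have hxP : x ∈ P := ⟨0, by omega, hw0⟩
  have hwmP : w m ∈ P := ⟨m, le_refl m, rfl⟩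
  have hcP : c ∈ P := ⟨1, by omega, hw1⟩
  have hnotP : ∀ v, v ≠ x → v ≠ w m → v ∉ Mid → v ∉ P := by
    rintro v h1 h2 h3 ⟨i, hile, heq⟩
    rcases Nat.eq_zero_or_pos i with rfl | hipos
    · exact h1 (by rw [← heq, hw0])
    rcases eq_or_lt_of_le hile with rfl | hilt
    · exact h2 heq.symm
    · exact h3 ⟨i, hipos, hilt, heq⟩
  -- f maps Mid into Mid
  have hMidf : ∀ v, v ∈ Mid → f v ∈ Mid := by
    rintro v ⟨i, hipos, hilt, rfl⟩
    by_cases hi : Even i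
    · have hige : 2 ≤ i := by rcases hi with ⟨t, ht⟩; omega
      have hi2 : ¬ Even (i - 1) := by
        rw [Nat.even_sub (by omega)]
        simp [hi]
      have hstep := hfback (i-1) hi2
      rw [show i - 1 + 1 = i by omega] at hstep
      exact ⟨i - 1, by omega, by omega, hstep.symm⟩
    · refine ⟨i + 1, by omega, ?_, hwso i hi⟩
      rcases eq_or_lt_of_le (show i + 1 ≤ m by omega) with h' | h'
      · exact absurd (h' ▸ Nat.even_add_one.mpr hi) hmodd
      · exact h'
  have hMidnx : ∀ v, v ∈ Mid → v ≠ x := by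
    rintro v ⟨i, hi0, him, rfl⟩ h
    rw [← hw0] at h
    exact absurd (hinj i (by omega) 0 (by omega) h) (by omega)
  have hMidnm : ∀ v, v ∈ Mid → v ≠ w m := by
    rintro v ⟨i, hi0, him, rfl⟩ h
    exact absurd (hinj i (by omega) m (le_refl m) h) (by omega)
  have hPg : ∀ v, v ∉ P → g v ∉ P := by
    intro v hv hgv
    apply hv
    obtain ⟨i, hile, heq⟩ := hgv
    have hvq : v = g (w i) := by rw [heq, hginv]
    by_cases hi : Even i
    · have : i < m := lt_of_le_of_ne hile (by rintro rfl; exact hmodd hi)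
      exact ⟨i+1, by omega, by rw [hwse i hi, ← hvq]⟩
    · have hi0 : i ≠ 0 := by rintro rfl; exact hi Even.zero
      refine ⟨i-1, by omega, ?_⟩
      have hst := hgback (i-1) (by rw [Nat.even_sub (by omega)]; simp [hi])
      rw [show i - 1 + 1 = i by omega] at hst
      rw [hvq]
      exact hst.symm
  refine exists_pm_of_involution
    (fun v => if v = x then w m else if v = w m then x else if v ∈ Mid then f v else g v)
    (fun v => ?_) (fun v => ?_)
  · by_cases h1 : v = x
    · subst h1
      rw [if_pos rfl, if_neg (Ne.symm hxm), if_pos rfl]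
    · rw [if_neg h1]
      by_cases h2 : v = w m
      · subst h2
        rw [if_pos rfl, if_pos rfl]
      · rw [if_neg h2]
        by_cases h3 : v ∈ Mid
        · rw [if_pos h3]
          have hf3 := hMidf v h3
          rw [if_neg (hMidnx _ hf3), if_neg (hMidnm _ hf3), if_pos hf3]
          exact hfinv v
        · rw [if_neg h3]
          have hvP : v ∉ P := hnotP v h1 h2 h3
          have hgvP : g v ∉ P := hPg v hvP
          rw [if_neg (show ¬ (g v = x) from fun h => hgvP (h ▸ hxP)),
            if_neg (show ¬ (g v = w m) from fun h => hgvP (h ▸ hwmP)),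
            if_neg (show ¬ (g v ∈ Mid) from fun h => hgvP (hMidP h))]
          exact hginv v
  · by_cases h1 : v = x
    · subst h1
      rw [if_pos rfl]
      rcases hm with h' | h'
      · rw [h']; exact hxa
      · rw [h']; exact hxb
    · rw [if_neg h1]
      by_cases h2 : v = w m
      · subst h2
        rw [if_pos rfl]
        rcases hm with h' | h'
        · rw [h']; exact hxa.symm
        · rw [h']; exact hxb.symm
      · rw [if_neg h2]
        by_cases h3 : v ∈ Mid
        · rw [if_pos h3]
          obtain ⟨i, hi0, him, heq⟩ := h3
          rcases sup_edge_adj_cases (hf v) with h | ⟨rfl, h⟩ | ⟨rfl, h⟩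
          · exact h
          · exact absurd (Or.inl heq) (hmin i him)
          · exact absurd (Or.inr heq) (hmin i him)
        · rw [if_neg h3]
          have hvP : v ∉ P := hnotP v h1 h2 h3
          rcases sup_edge_adj_cases (hg v) with h | ⟨rfl, h⟩ | ⟨rfl, h⟩
          · exact h
          · exact absurd hxP hvP
          · exact absurd hcP hvP

lemma tutte_easy [Fintype V] {G : SimpleGraph V} {M : G.Subgraph} (hM : M.IsPerfectMatching)
    (S : Finset V) :
    {c : ((⊤ : G.Subgraph).deleteVerts ↑S).coe.ConnectedComponent |
        Odd (Nat.card c.supp)}.ncard ≤ S.card := by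
  classical
  have key := fun (c : {c : ((⊤ : G.Subgraph).deleteVerts ↑S).coe.ConnectedComponent //
      Odd (Nat.card c.supp)}) =>
    SimpleGraph.ConnectedComponent.odd_matches_node_outside (u := ↑S) hM ⟨c.1, by show Odd _; rw [← Nat.card_coe_set_eq]; exact c.2⟩
  choose F hF1 v hv1 hv2 using key
  have hinj : Function.Injective F := by
    intro c1 c2 heq
    obtain ⟨p, hp1, hp2⟩ := hM.1 (hM.2 (F c1))
    have e1 : (↑(v c1) : V) = p := hp2 _ (hv1 c1).symm
    have e2 : (↑(v c2) : V) = p := hp2 _ (by rw [heq]; exact (hv1 c2).symm)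
    have : v c1 = v c2 := Subtype.ext (e1.trans e2.symm)
    have h1 := hv2 c1
    have h2 := hv2 c2
    rw [this] at h1
    apply Subtype.ext
    rw [← (SimpleGraph.ConnectedComponent.mem_supp_iff _ _).mp h1,
      ← (SimpleGraph.ConnectedComponent.mem_supp_iff _ _).mp h2]
  have hcard : Nat.card {c : ((⊤ : G.Subgraph).deleteVerts ↑S).coe.ConnectedComponent //
      Odd (Nat.card c.supp)} ≤ Nat.card {x : V // x ∈ S} :=
    Nat.card_le_card_of_injective (fun c => ⟨F c, hF1 c⟩)
      (fun c1 c2 h => hinj (congrArg Subtype.val h))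
  rw [← Nat.card_coe_set_eq]
  calc Nat.card ↥{c : ((⊤ : G.Subgraph).deleteVerts ↑S).coe.ConnectedComponent |
        Odd (Nat.card c.supp)} ≤ Nat.card {x : V // x ∈ S} := hcard
    _ = S.card := by rw [Nat.card_eq_fintype_card, Fintype.card_coe]

lemma tutte_mono [Fintype V] {G G' : SimpleGraph V} (h : G ≤ G') (u : Set V)
    (hle : ((⊤ : G.Subgraph).deleteVerts u).coe ≤ ((⊤ : G'.Subgraph).deleteVerts u).coe) :
    {c : ((⊤ : G'.Subgraph).deleteVerts u).coe.ConnectedComponent |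
        Odd (Nat.card c.supp)}.ncard ≤
    {c : ((⊤ : G.Subgraph).deleteVerts u).coe.ConnectedComponent |
        Odd (Nat.card c.supp)}.ncard := by
  classical
  have key := fun (c : {c : ((⊤ : G'.Subgraph).deleteVerts u).coe.ConnectedComponent //
      Odd (Nat.card c.supp)}) => by
    have ho : Odd {d : ((⊤ : G.Subgraph).deleteVerts u).coe.ConnectedComponent |
        d.supp ⊆ c.1.supp ∧ Odd (Nat.card d.supp)}.ncard := by
      have h0 := (SimpleGraph.ConnectedComponent.odd_oddComponents_ncard_subset_supp
        (G := ((⊤ : G.Subgraph).deleteVerts u).coe) hle c.1).mpr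
        (by rw [← Nat.card_coe_set_eq]; exact c.2)
      convert h0 using 2
      ext d
      simp only [Set.mem_setOf_eq, Nat.card_coe_set_eq]
      tauto
    have hne : {d : ((⊤ : G.Subgraph).deleteVerts u).coe.ConnectedComponent |
        d.supp ⊆ c.1.supp ∧ Odd (Nat.card d.supp)}.Nonempty := by
      rw [Set.nonempty_iff_ne_empty]
      intro hemp
      rw [hemp] at ho
      simp at ho
    exact hne
  choose F hF using fun c => (key c)
  have hinj : Function.Injective F := by
    intro c1 c2 heq
    obtain ⟨hsub1, hodd1⟩ := hF c1
    obtain ⟨hsub2, hodd2⟩ := hF c2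
    rw [heq] at hsub1
    obtain ⟨p, hp⟩ := (F c2).exists_rep
    have hps : p ∈ (F c2).supp := by
      rw [SimpleGraph.ConnectedComponent.mem_supp_iff]
      exact hp
    apply Subtype.ext
    rw [← (SimpleGraph.ConnectedComponent.mem_supp_iff _ _).mp (hsub1 hps),
      ← (SimpleGraph.ConnectedComponent.mem_supp_iff _ _).mp (hsub2 hps)]
  have hcard := Nat.card_le_card_of_injective
    (fun c => (⟨F c, (hF c).2⟩ : {d : ((⊤ : G.Subgraph).deleteVerts u).coe.ConnectedComponent //
        Odd (Nat.card d.supp)}))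
    (fun c1 c2 h => hinj (congrArg Subtype.val h))
  rw [← Nat.card_coe_set_eq, ← Nat.card_coe_set_eq]
  exact hcard

lemma clique_even_matching [Fintype V] {G : SimpleGraph V} {s : Set V}
    (hs : G.IsClique s) (he : Even s.ncard) :
    ∃ M : G.Subgraph, M.verts = s ∧ M.IsMatching := by
  classical
  obtain ⟨t, hts, htcard⟩ := Finset.exists_subset_card_eq
    (show s.toFinset.card / 2 ≤ s.toFinset.card from Nat.div_le_self _ _)
  set t2 := s.toFinset \ t with ht2
  have hcards : t2.card = t.card := by
    rw [ht2, Finset.card_sdiff_of_subset hts, htcard]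
    rw [Set.ncard_eq_toFinset_card'] at he
    obtain ⟨k, hk⟩ := he
    omega
  have hdisj : Disjoint (↑t : Set V) (↑t2 : Set V) := by
    rw [ht2]
    simp only [Finset.coe_sdiff, Set.disjoint_left]
    intro a ha ⟨_, hna⟩
    exact hna ha
  have hequiv : Nonempty ((↑t : Set V) ≃ (↑t2 : Set V)) := by
    apply Nonempty.intro
    apply Fintype.equivOfCardEq
    simp [hcards]
  obtain ⟨f⟩ := hequiv
  obtain ⟨M, hM1, hM2⟩ := SimpleGraph.Subgraph.IsMatching.exists_of_disjoint_sets_of_equiv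
    hdisj f (fun v => by
      apply hs
      · exact Set.mem_toFinset.mp (hts v.2)
      · have h2 : (↑(f v) : V) ∈ t2 := by exact_mod_cast (f v).2
        exact Set.mem_toFinset.mp (Finset.sdiff_subset h2)
      · exact fun hh => hdisj.ne_of_mem v.2 (f v).2 hh)
  refine ⟨M, ?_, hM2⟩
  rw [hM1, ht2]
  simp only [Finset.coe_sdiff, Set.coe_toFinset]
  rw [Set.union_diff_cancel]
  · exact fun v hv => Set.mem_toFinset.mp (hts hv)

lemma exists_path2 {W : Type*} {H : SimpleGraph W} {p q : W} (w : H.Walk p q) :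
    p ≠ q → ¬ H.Adj p q → ∃ x y z, H.Adj x y ∧ H.Adj y z ∧ ¬ H.Adj x z ∧ x ≠ z := by
  induction w with
  | nil => intro hne _; exact absurd rfl hne
  | @cons p v q h w ih =>
    intro hne hna
    by_cases hvq : v = q
    · subst hvq; exact absurd h hna
    by_cases hadj : H.Adj v q
    · exact ⟨p, v, q, h, hadj, hna, hne⟩
    · exact ih hvq hadj

lemma tutte_cliques [Fintype V] {G : SimpleGraph V} {u : Set V}
    (hu : ∀ v ∈ u, ∀ w, w ≠ v → G.Adj w v)
    (hcl : ∀ c : ((⊤ : G.Subgraph).deleteVerts u).coe.ConnectedComponent,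
        G.IsClique (Subtype.val '' c.supp))
    (hcount : {c : ((⊤ : G.Subgraph).deleteVerts u).coe.ConnectedComponent |
        Odd (Nat.card c.supp)}.ncard ≤ u.ncard)
    (heven : Even (Fintype.card V)) :
    ∃ M : G.Subgraph, M.IsPerfectMatching := by
  classical
  set H := ((⊤ : G.Subgraph).deleteVerts u).coe with hH
  set Codd := {c : H.ConnectedComponent | Odd (Nat.card c.supp)} with hCodd
  -- representative of each component
  have hrep : ∀ c : H.ConnectedComponent, ∃ v, v ∈ c.supp := by
    intro c
    obtain ⟨v, hv⟩ := c.exists_rep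
    exact ⟨v, by rw [SimpleGraph.ConnectedComponent.mem_supp_iff]; exact hv⟩
  choose r hr using hrep
  set R : H.ConnectedComponent → V := fun c => ↑(r c) with hR
  have hRD : ∀ c, R c ∉ u := fun c => ((r c).2).2
  have hRsupp : ∀ c, R c ∈ Subtype.val '' c.supp := fun c => ⟨r c, hr c, rfl⟩
  have hsuppdisj : ∀ c1 c2 : H.ConnectedComponent, c1 ≠ c2 →
      Disjoint (Subtype.val '' c1.supp) (Subtype.val '' c2.supp) := by
    intro c1 c2 hne
    exact Set.disjoint_image_of_injective Subtype.val_injective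
      (SimpleGraph.pairwise_disjoint_supp_connectedComponent _ hne)
  have hRinj : Function.Injective R := by
    intro c1 c2 heq
    by_contra hne
    exact Set.disjoint_left.mp (hsuppdisj c1 c2 hne) (hRsupp c1) (heq ▸ hRsupp c2)
  have hmemSupp : ∀ c' c, R c' ∈ Subtype.val '' c.supp → c' = c := by
    intro c' c hmem
    by_contra hne
    exact Set.disjoint_left.mp (hsuppdisj c' c hne) (hRsupp c') hmem
  -- the injection from odd components into u
  obtain ⟨φ⟩ : Nonempty (↥Codd ↪ ↥u) := by
    apply Function.Embedding.nonempty_of_card_le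
    rw [← Nat.card_eq_fintype_card, ← Nat.card_eq_fintype_card,
      Nat.card_coe_set_eq, Nat.card_coe_set_eq]
    exact hcount
  set A : Set V := Set.range (fun c : ↥Codd => R ↑c) with hA
  set B : Set V := Set.range (fun c : ↥Codd => (↑(φ c) : V)) with hB
  have hAu : ∀ v ∈ A, v ∉ u := by rintro v ⟨c, rfl⟩; exact hRD _
  have hBu : B ⊆ u := by rintro v ⟨c, rfl⟩; exact (φ c).2
  have hdisjAB : Disjoint A B := by
    rw [Set.disjoint_left]
    intro v hv hvB
    exact hAu v hv (hBu hvB)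
  have hRoddinj : Function.Injective (fun c : ↥Codd => R ↑c) :=
    fun c1 c2 h => Subtype.ext (hRinj h)
  have hphiinj : Function.Injective (fun c : ↥Codd => (↑(φ c) : V)) :=
    fun c1 c2 h => φ.injective (Subtype.ext h)
  obtain ⟨M0, hM0verts, hM0⟩ := SimpleGraph.Subgraph.IsMatching.exists_of_disjoint_sets_of_equiv
    hdisjAB ((Equiv.ofInjective _ hRoddinj).symm.trans (Equiv.ofInjective _ hphiinj))
    (fun v => by
      set c := (Equiv.ofInjective _ hRoddinj).symm v
      exact hu _ (hBu (by exact ⟨c, rfl⟩)) _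
        (fun hh => hdisjAB.ne_of_mem v.2 (Set.mem_range_self c) hh))
  -- matchings inside cliques
  have hsc : ∀ c : H.ConnectedComponent,
      ∃ M : G.Subgraph, M.verts = (Subtype.val '' c.supp) \ A ∧ M.IsMatching := by
    intro c
    apply clique_even_matching ((hcl c).subset Set.diff_subset)
    by_cases hodd : c ∈ Codd
    · have hseq : (Subtype.val '' c.supp) \ A = (Subtype.val '' c.supp) \ {R c} := by
        ext x
        simp only [Set.mem_diff, and_congr_right_iff]
        intro hx
        constructor
        · intro hxA hxR
          exact hxA (by rw [hxR]; exact ⟨⟨c, hodd⟩, rfl⟩)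
        · rintro hxR ⟨c', rfl⟩
          exact hxR (Set.mem_singleton_iff.mpr (congrArg R (hmemSupp _ _ hx)))
      rw [hseq, Set.ncard_diff_singleton_of_mem (hRsupp c)]
      have : (Subtype.val '' c.supp).ncard = Nat.card c.supp := by
        rw [Set.ncard_image_of_injective _ Subtype.val_injective, Nat.card_coe_set_eq]
      rw [this]
      exact Nat.Odd.sub_odd hodd odd_one
    · have hseq : (Subtype.val '' c.supp) \ A = Subtype.val '' c.supp := by
        ext x
        simp only [Set.mem_diff, and_iff_left_iff_imp]
        intro hx
        rintro ⟨c', rfl⟩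
        exact hodd ((hmemSupp _ _ hx) ▸ c'.2)
      rw [hseq, Set.ncard_image_of_injective _ Subtype.val_injective,
        ← Nat.card_coe_set_eq]
      exact Nat.not_odd_iff_even.mp (by exact hodd)
  choose MC hMC1 hMC2 using hsc
  -- assembling
  have hMCsup : ∀ c, (MC c).support = (Subtype.val '' c.supp) \ A := by
    intro c
    rw [SimpleGraph.Subgraph.IsMatching.support_eq_verts (hMC2 c), hMC1]
  have hMCdisj : Pairwise fun c1 c2 => Disjoint (MC c1).support (MC c2).support := by
    intro c1 c2 hne
    rw [hMCsup, hMCsup]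
    exact ((hsuppdisj c1 c2 hne).mono Set.diff_subset Set.diff_subset)
  have hMCm : (⨆ c, MC c).IsMatching := SimpleGraph.Subgraph.IsMatching.iSup hMC2 hMCdisj
  have hMCverts : (⨆ c, MC c).verts = (Set.univ \ u) \ A := by
    rw [SimpleGraph.Subgraph.verts_iSup]
    have : ⋃ c : H.ConnectedComponent, (MC c).verts
        = ⋃ c : H.ConnectedComponent, ((Subtype.val '' c.supp) \ A) := by
      exact Set.iUnion_congr hMC1
    rw [this, ← Set.iUnion_diff]
    congr 1
    -- ⋃ c, val '' c.supp = univ \ u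
    rw [← Set.image_iUnion, SimpleGraph.iUnion_connectedComponentSupp, Set.image_univ,
      Subtype.range_coe]
    simp [Subgraph.deleteVerts_verts, Subgraph.verts_top]
  have hM0support : M0.support = A ∪ B :=
    (SimpleGraph.Subgraph.IsMatching.support_eq_verts hM0) ▸ hM0verts
  have hM1m : (M0 ⊔ ⨆ c, MC c).IsMatching := by
    apply hM0.sup hMCm
    rw [hM0support, SimpleGraph.Subgraph.IsMatching.support_eq_verts hMCm, hMCverts]
    rw [Set.disjoint_union_left]
    constructor
    · exact Set.disjoint_left.mpr (fun a ha hd => hd.2 ha)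
    · exact Set.disjoint_left.mpr (fun a ha hd => hd.1.2 (hBu ha))
  have hM1verts : (M0 ⊔ ⨆ c, MC c).verts = B ∪ (Set.univ \ u) := by
    rw [SimpleGraph.Subgraph.verts_sup, hM0verts, hMCverts]
    ext x
    constructor
    · rintro ((hA' | hB') | hD)
      · exact Or.inr ⟨trivial, hAu _ hA'⟩
      · exact Or.inl hB'
      · exact Or.inr hD.1
    · rintro (hB' | hD)
      · exact Or.inl (Or.inr hB')
      · by_cases hxA : x ∈ A
        · exact Or.inl (Or.inl hxA)
        · exact Or.inr ⟨hD, hxA⟩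
  set U' := u \ B with hU'
  have hcompl : U' = ((M0 ⊔ ⨆ c, MC c).verts)ᶜ := by
    rw [hM1verts]
    ext x
    simp only [hU', Set.mem_diff, Set.mem_compl_iff, Set.mem_union, Set.mem_univ, true_and]
    tauto
  have hU'even : Even U'.ncard := by
    have h1 := Set.ncard_add_ncard_compl (M0 ⊔ ⨆ c, MC c).verts
    have h2 : Even ((M0 ⊔ ⨆ c, MC c).verts.ncard) := by
      rw [Set.ncard_eq_toFinset_card']
      exact SimpleGraph.Subgraph.IsMatching.even_card hM1m
    rw [hcompl]
    rw [Nat.card_eq_fintype_card] at h1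
    obtain ⟨k1, hk1⟩ := h2
    obtain ⟨k2, hk2⟩ := heven
    exact ⟨k2 - k1, by omega⟩
  have hU'clique : G.IsClique U' := fun x hx y hy hxy => hu y hy.1 x hxy
  obtain ⟨M2, hM2verts, hM2⟩ := clique_even_matching hU'clique hU'even
  refine ⟨(M0 ⊔ ⨆ c, MC c) ⊔ M2, ?_, ?_⟩
  · apply hM1m.sup hM2
    apply Set.disjoint_left.mpr
    intro a ha hd
    have h1 := SimpleGraph.Subgraph.support_subset_verts _ ha
    have h2 := SimpleGraph.Subgraph.support_subset_verts _ hd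
    rw [hM2verts, hcompl] at h2
    exact h2 h1
  · intro v
    rw [SimpleGraph.Subgraph.verts_sup, hM2verts, hcompl]
    exact (Set.union_compl_self _).symm ▸ trivial

end TutteAux

/-- Tutte's 1-factor theorem. -/
theorem tutte_one_factor {V : Type*} [Fintype V] (G : SimpleGraph V) :
    (∃ M : G.Subgraph, M.IsPerfectMatching) ↔
      ∀ S : Finset V,
        {c : ((⊤ : G.Subgraph).deleteVerts ↑S).coe.ConnectedComponent |
            Odd (Nat.card c.supp)}.ncard ≤ S.card := by
  classical
  constructor
  · rintro ⟨M, hM⟩ S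
    exact tutte_easy hM S
  · intro hS
    by_contra hno
    push_neg at hno
    obtain ⟨Gmax, hle, hmaxfree, hmax⟩ := SimpleGraph.exists_maximal_isMatchingFree hno
    -- |V| is even
    have heven : Even (Fintype.card V) := by
      by_contra hodd
      rw [Nat.not_even_iff_odd] at hodd
      have hv : Odd (Nat.card ↥((⊤ : G.Subgraph).deleteVerts ((∅ : Finset V) : Set V)).verts) := by
        have he : ((⊤ : G.Subgraph).deleteVerts ((∅ : Finset V) : Set V)).verts = Set.univ := by
          simp
        rw [he, Nat.card_coe_set_eq, Set.ncard_univ, Nat.card_eq_fintype_card]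
        exact hodd
      have hoddcomp := by
        have h0 := (SimpleGraph.odd_ncard_oddComponents
          (G := ((⊤ : G.Subgraph).deleteVerts ((∅ : Finset V) : Set V)).coe)).mpr hv
        simp only [SimpleGraph.oddComponents, ← Nat.card_coe_set_eq] at h0
        exact h0
      have h0 := hS ∅
      rw [Nat.card_coe_set_eq] at hoddcomp
      obtain ⟨k, hk⟩ := hoddcomp
      simp only [Finset.card_empty, Nat.le_zero] at h0
      rw [h0] at hk
      omega
    -- the universal vertices of Gmax
    set u : Set V := {v | ∀ w, w ≠ v → Gmax.Adj w v} with hudef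
    have hle' : ((⊤ : G.Subgraph).deleteVerts u).coe ≤ ((⊤ : Gmax.Subgraph).deleteVerts u).coe := by
      intro a b hab
      simp only [SimpleGraph.Subgraph.coe_adj, SimpleGraph.Subgraph.deleteVerts_adj,
        SimpleGraph.Subgraph.verts_top, SimpleGraph.Subgraph.top_adj] at *
      exact ⟨⟨trivial, hab.2.1⟩, ⟨trivial, hab.2.2.2.1⟩, hle hab.2.2.2.2⟩
    by_cases hcl : ∀ c : ((⊤ : Gmax.Subgraph).deleteVerts u).coe.ConnectedComponent,
        Gmax.IsClique (Subtype.val '' c.supp)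
    · -- every component is a clique: build a matching, contradiction
      have hcount : {c : ((⊤ : Gmax.Subgraph).deleteVerts u).coe.ConnectedComponent |
          Odd (Nat.card c.supp)}.ncard ≤ u.ncard := by
        have hSu := hS u.toFinset
        rw [Set.coe_toFinset] at hSu
        calc {c : ((⊤ : Gmax.Subgraph).deleteVerts u).coe.ConnectedComponent |
            Odd (Nat.card c.supp)}.ncard
            ≤ {c : ((⊤ : G.Subgraph).deleteVerts u).coe.ConnectedComponent |
            Odd (Nat.card c.supp)}.ncard := tutte_mono hle u hle'
          _ ≤ u.toFinset.card := hSu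
          _ = u.ncard := (Set.ncard_eq_toFinset_card' u).symm
      obtain ⟨M, hM⟩ := tutte_cliques (fun v hv w hw => by exact hv w hw) hcl hcount heven
      exact hmaxfree M hM
    · -- some component is not a clique
      push_neg at hcl
      obtain ⟨c0, hc0⟩ := hcl
      rw [SimpleGraph.isClique_iff, Set.Pairwise] at hc0
      push_neg at hc0
      obtain ⟨x', hx', y', hy', hxy', hnadj⟩ := hc0
      obtain ⟨xs, hxs, rfl⟩ := hx'
      obtain ⟨ys, hys, rfl⟩ := hy'
      have hxys : xs ≠ ys := fun h => hxy' (congrArg _ h)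
      have hreach : ((⊤ : Gmax.Subgraph).deleteVerts u).coe.Reachable xs ys := by
        apply SimpleGraph.ConnectedComponent.exact
        rw [(SimpleGraph.ConnectedComponent.mem_supp_iff _ _).mp hxs,
          (SimpleGraph.ConnectedComponent.mem_supp_iff _ _).mp hys]
      obtain ⟨wlk⟩ := hreach
      have hnadj' : ¬ ((⊤ : Gmax.Subgraph).deleteVerts u).coe.Adj xs ys := by
        intro h
        exact hnadj (((⊤ : Gmax.Subgraph).deleteVerts u).adj_sub h)
      obtain ⟨p, q, s, hpq, hqs, hnps, hps⟩ := exists_path2 wlk hxys hnadj'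
      have hxa : Gmax.Adj ↑q ↑p :=
        (((⊤ : Gmax.Subgraph).deleteVerts u).adj_sub hpq).symm
      have hxb : Gmax.Adj ↑q ↑s :=
        ((⊤ : Gmax.Subgraph).deleteVerts u).adj_sub hqs
      have hab : ¬ Gmax.Adj ↑p ↑s := by
        intro h
        apply hnps
        show ((⊤ : Gmax.Subgraph).deleteVerts u).Adj ↑p ↑s
        exact SimpleGraph.Subgraph.deleteVerts_adj.mpr
          ⟨Set.mem_univ _, p.2.2, Set.mem_univ _, s.2.2, SimpleGraph.Subgraph.top_adj.mpr h⟩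
      have hanb : (↑p : V) ≠ ↑s := fun h => hps (Subtype.ext h)
      have hq : (↑q : V) ∉ u := q.2.2
      have hq' : ¬ ∀ w, w ≠ (↑q : V) → Gmax.Adj w ↑q := hq
      push_neg at hq'
      obtain ⟨cV, hcne, hcnadj⟩ := hq'
      have hxc : ¬ Gmax.Adj ↑q cV := fun h => hcnadj h.symm
      have hqc : (↑q : V) ≠ cV := fun h => hcne h.symm
      have h1 : Gmax < Gmax ⊔ edge ↑p ↑s := by
        apply lt_of_le_of_ne le_sup_left
        intro heq
        apply hab
        have : (Gmax ⊔ edge ↑p ↑s).Adj ↑p ↑s :=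
          Or.inr ((edge_adj _ _ _ _).mpr ⟨Or.inl ⟨rfl, rfl⟩, hanb⟩)
        rwa [← heq] at this
      have h2 : Gmax < Gmax ⊔ edge ↑q cV := by
        apply lt_of_le_of_ne le_sup_left
        intro heq
        apply hxc
        have : (Gmax ⊔ edge ↑q cV).Adj ↑q cV :=
          Or.inr ((edge_adj _ _ _ _).mpr ⟨Or.inl ⟨rfl, rfl⟩, hqc⟩)
        rwa [← heq] at this
      obtain ⟨M1, hM1⟩ := hmax _ h1
      obtain ⟨M2, hM2⟩ := hmax _ h2
      obtain ⟨f, hfinv, hfadj⟩ := pm_to_involution hM1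
      obtain ⟨g, hginv, hgadj⟩ := pm_to_involution hM2
      obtain ⟨M, hM⟩ := tutte_core hxa hxb hab hxc hanb hqc hfinv hginv
        (fun v => M1.adj_sub (hfadj v)) (fun v => M2.adj_sub (hgadj v))
      exact hmaxfree M hM
end

section
/- In a semigroup S satisfying x·x = x and x·y·x = x for all x, y (a rectangular band), every element is idempotent and S is isomorphic to a direct product of a left-zero semigroup and a right-zero semigroup. -/
/-- A rectangular band (semigroup with x·x = x and x·y·x = x) has all elements
idempotent and is isomorphic to a product of a left-zero and a right-zero semigroup. -/
theorem rectangular_band_structure {S : Type u} [Semigroup S]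
    (h1 : ∀ x : S, x * x = x) (h2 : ∀ x y : S, x * y * x = x) :
    (∀ x : S, x * x = x) ∧
      ∃ (L R : Type u) (_ : Semigroup L) (_ : Semigroup R),
        (∀ a b : L, a * b = a) ∧ (∀ a b : R, a * b = b) ∧
          Nonempty (S ≃* L × R) := by
  refine ⟨h1, ?_⟩
  -- key lemma: x*y*z = x*z
  have key : ∀ x y z : S, x * y * z = x * z := by
    intro x y z
    conv_rhs => rw [← h2 x (y * z)]
    simp only [mul_assoc]
    rw [← mul_assoc z x z, h2]
  rcases isEmpty_or_nonempty S with hS | hS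
  · -- empty case
    letI instL : Semigroup PEmpty.{u+1} :=
      { mul := fun a _ => a, mul_assoc := fun a _ _ => a.elim }
    refine ⟨PEmpty, PEmpty, instL, instL, fun a _ => a.elim, fun a _ => a.elim, ⟨?_⟩⟩
    exact { toFun := fun x => isEmptyElim x, invFun := fun p => p.1.elim,
            left_inv := fun x => isEmptyElim x,
            right_inv := fun p => p.1.elim,
            map_mul' := fun x => isEmptyElim x }
  · obtain ⟨e⟩ := hS
    letI instL : Semigroup {a : S // a * e = a} :=
      { mul := fun a _ => a, mul_assoc := fun _ _ _ => rfl }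
    letI instR : Semigroup {b : S // e * b = b} :=
      { mul := fun _ b => b, mul_assoc := fun _ _ _ => rfl }
    refine ⟨_, _, instL, instR, fun a b => rfl, fun a b => rfl, ⟨?_⟩⟩
    refine
      { toFun := fun x => (⟨x * e, by rw [mul_assoc, h1]⟩, ⟨e * x, by rw [← mul_assoc, h1]⟩)
        invFun := fun p => p.1.1 * p.2.1
        left_inv := fun x => by
          show x * e * (e * x) = x
          rw [mul_assoc, ← mul_assoc e e x, h1, ← mul_assoc, h2]
        right_inv := fun p => by
          obtain ⟨⟨a, ha⟩, ⟨b, hb⟩⟩ := p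
          ext
          · show a * b * e = a
            rw [key]; exact ha
          · show e * (a * b) = b
            rw [← mul_assoc, key]; exact hb
        map_mul' := fun x y => by
          ext
          · show (x * y) * e = x * e
            rw [key]
          · show e * (x * y) = e * y
            rw [← mul_assoc, key] }
end

section
/- A linear congruential generator x_{n+1} = (a·x_n + c) mod m has period m (i.e., is a bijection iterating through all residues) if c is coprime to m, a ≡ 1 mod p for every prime p dividing m, and a ≡ 1 mod 4 if 4 divides m (Hull–Dobell theorem, one direction: these conditions imply full period). -/
open Finset

private lemma HD_sub_one_dvd (x : ℤ) (n : ℕ) : (x - 1) ∣ x ^ n - 1 :=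
  ⟨∑ i ∈ range n, x ^ i, by rw [← geom_sum_mul, mul_comm]⟩

private lemma HD_sum_sub (b x : ℤ) (h : b ∣ x - 1) (n : ℕ) :
    b ∣ (∑ i ∈ range n, x ^ i) - n := by
  have heq : (∑ i ∈ range n, x ^ i) - (n : ℤ) = ∑ i ∈ range n, (x ^ i - 1) := by
    rw [Finset.sum_sub_distrib]; simp
  rw [heq]
  exact Finset.dvd_sum fun i _ => h.trans (HD_sub_one_dvd x i)

private lemma HD_dvd_of_dvd_sum (b x : ℤ) (h : b ∣ x - 1) (n : ℕ)
    (hs : b ∣ ∑ i ∈ range n, x ^ i) : b ∣ (n : ℤ) := by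
  have := HD_sum_sub b x h n
  have : b ∣ (∑ i ∈ range n, x ^ i) - ((∑ i ∈ range n, x ^ i) - n) := dvd_sub hs this
  simpa using this

private lemma HD_sum_prime (p : ℕ) (hp : p.Prime) (x : ℤ) (hx : (p : ℤ) ∣ x - 1)
    (h4 : p = 2 → (4 : ℤ) ∣ x - 1) :
    (p : ℤ) ^ 2 ∣ (∑ i ∈ range p, x ^ i) - p := by
  rcases eq_or_ne p 2 with h2 | h2
  · subst h2
    have heq : (∑ i ∈ range 2, x ^ i) - ((2 : ℕ) : ℤ) = x - 1 := by
      rw [Finset.sum_range_succ, Finset.sum_range_succ]; push_cast; ring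
    rw [heq]
    have : ((2 : ℕ) : ℤ) ^ 2 = 4 := by norm_num
    rw [this]; exact h4 rfl
  · -- odd prime
    have heq : (∑ i ∈ range p, x ^ i) - (p : ℤ)
        = (∑ i ∈ range p, ∑ j ∈ range i, x ^ j) * (x - 1) := by
      rw [Finset.sum_mul]
      have : (∑ i ∈ range p, x ^ i) - (p : ℤ) = ∑ i ∈ range p, (x ^ i - 1) := by
        rw [Finset.sum_sub_distrib]; simp
      rw [this]
      exact Finset.sum_congr rfl fun i _ => by rw [geom_sum_mul]
    rw [heq, sq]
    refine mul_dvd_mul ?_ hx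
    -- p ∣ ∑ i ∈ range p, T i;  T i ≡ i mod p, and p ∣ ∑ i ∈ range p, i
    have h1 : (p : ℤ) ∣ ∑ i ∈ range p, (∑ j ∈ range i, x ^ j - i) :=
      Finset.dvd_sum fun i _ => HD_sum_sub _ x hx i
    have h2' : (p : ℤ) ∣ ∑ i ∈ range p, (i : ℤ) := by
      have hn : p ∣ ∑ i ∈ range p, i := by
        have hg := Finset.sum_range_id_mul_two p
        have hd : p ∣ (∑ i ∈ range p, i) * 2 := hg ▸ Dvd.intro _ rfl
        exact (Nat.Coprime.dvd_of_dvd_mul_right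
          ((Nat.coprime_primes hp Nat.prime_two).mpr h2) hd)
      exact_mod_cast Int.natCast_dvd_natCast.mpr (by exact_mod_cast hn.trans (dvd_refl _)) |>.trans
        (dvd_of_eq (by push_cast; ring))
    have := dvd_add h1 h2'
    simpa [Finset.sum_sub_distrib] using this

private lemma HD_geom_factor (x : ℤ) (p n : ℕ) :
    ∑ i ∈ range (p * n), x ^ i
      = (∑ j ∈ range n, (x ^ p) ^ j) * (∑ k ∈ range p, x ^ k) := by
  induction n with
  | zero => simp
  | succ n ih =>
    rw [Nat.mul_succ, Finset.sum_range_add, ih, Finset.sum_range_succ, add_mul]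
    congr 1
    rw [Finset.mul_sum]
    exact Finset.sum_congr rfl fun k _ => by rw [← pow_mul, ← pow_add]

private lemma HD_pow_dvd (p : ℕ) (hp : p.Prime) :
    ∀ (e : ℕ) (x : ℤ), (p : ℤ) ∣ x - 1 → (p = 2 → (4 : ℤ) ∣ x - 1) →
      ∀ d : ℕ, (p : ℤ) ^ e ∣ (∑ i ∈ range d, x ^ i) → (p : ℤ) ^ e ∣ (d : ℤ) := by
  intro e
  induction e with
  | zero => intro x _ _ d _; simpa using one_dvd _
  | succ e ih =>
    intro x hx h4 d hd
    have hpd : (p : ℤ) ∣ (d : ℤ) :=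
      HD_dvd_of_dvd_sum _ x hx d ((dvd_pow_self (p : ℤ) (Nat.succ_ne_zero e)).trans hd)
    obtain ⟨d', rfl⟩ : p ∣ d := Int.natCast_dvd_natCast.mp hpd
    rw [HD_geom_factor] at hd
    obtain ⟨t, ht⟩ := HD_sum_prime p hp x hx h4
    have hsp : (∑ k ∈ range p, x ^ k) = p * (1 + p * t) := by
      have : (∑ k ∈ range p, x ^ k) = p + p ^ 2 * t := by linarith [ht]
      rw [this]; ring
    rw [hsp] at hd
    have hpne : (p : ℤ) ≠ 0 := by exact_mod_cast hp.ne_zero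
    have hd' : (p : ℤ) ^ e ∣ (∑ j ∈ range d', (x ^ p) ^ j) * (1 + p * t) := by
      have h : (p : ℤ) * ((p : ℤ) ^ e) ∣
          (p : ℤ) * ((∑ j ∈ range d', (x ^ p) ^ j) * (1 + p * t)) := by
        have : (∑ j ∈ range d', (x ^ p) ^ j) * ((p : ℤ) * (1 + p * t))
            = (p : ℤ) * ((∑ j ∈ range d', (x ^ p) ^ j) * (1 + p * t)) := by ring
        rw [← this, ← pow_succ']
        exact hd
      exact (mul_dvd_mul_iff_left hpne).mp h
    have hcop : IsCoprime ((p : ℤ) ^ e) (1 + p * t) :=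
      IsCoprime.pow_left ⟨-t, 1, by ring⟩
    have hA : (p : ℤ) ^ e ∣ ∑ j ∈ range d', (x ^ p) ^ j :=
      hcop.dvd_of_dvd_mul_right hd'
    have hx' : (p : ℤ) ∣ x ^ p - 1 := hx.trans (HD_sub_one_dvd x p)
    have h4' : p = 2 → (4 : ℤ) ∣ x ^ p - 1 := fun h => (h4 h).trans (HD_sub_one_dvd x p)
    have := ih (x ^ p) hx' h4' d' hA
    push_cast
    rw [pow_succ']
    exact mul_dvd_mul_left _ this

private lemma HD_mod_dvd {a q : ℕ} (h : a % q = 1) : q ∣ a - 1 :=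
  ⟨a / q, by
    have hq := Nat.div_add_mod a q
    rw [h] at hq
    exact Nat.sub_eq_of_eq_add hq.symm⟩

private lemma HD_mod_dvd_int {a q : ℕ} (ha1 : 1 ≤ a) (h : a % q = 1) :
    (q : ℤ) ∣ (a : ℤ) - 1 := by
  have := Int.natCast_dvd_natCast.mpr (HD_mod_dvd h)
  rwa [Nat.cast_sub ha1] at this

private lemma HD_m_dvd (m a : ℕ) (ha : ∀ p : ℕ, p.Prime → p ∣ m → a % p = 1)
    (ha4 : 4 ∣ m → a % 4 = 1) (ha1 : 1 ≤ a) (d : ℕ)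
    (hS : (m : ℤ) ∣ ∑ i ∈ range d, (a : ℤ) ^ i) : m ∣ d := by
  rw [Nat.dvd_iff_prime_pow_dvd_dvd]
  intro p k hp hpk
  rcases Nat.eq_zero_or_pos k with rfl | hk
  · simp
  have hpm : p ∣ m := (dvd_pow_self p hk.ne').trans hpk
  have hap : a % p = 1 := ha p hp hpm
  have px : (p : ℤ) ∣ (a : ℤ) - 1 := HD_mod_dvd_int ha1 hap
  have hSp : (p : ℤ) ^ k ∣ ∑ i ∈ range d, (a : ℤ) ^ i :=
    dvd_trans (by exact_mod_cast Int.natCast_dvd_natCast.mpr hpk) hS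
  by_cases h2 : p = 2 ∧ ¬ 4 ∣ m
  · obtain ⟨hp2, hm4⟩ := h2
    subst hp2
    have hk1 : k = 1 := by
      by_contra hne
      have h2k : 2 ≤ k := by omega
      exact hm4 (dvd_trans (by simpa using Nat.pow_dvd_pow 2 h2k) hpk)
    subst hk1
    rw [pow_one] at hSp ⊢
    exact_mod_cast HD_dvd_of_dvd_sum _ _ px d hSp
  · have h4' : p = 2 → (4 : ℤ) ∣ (a : ℤ) - 1 := by
      intro hp2
      have h4m : 4 ∣ m := by
        rcases Decidable.em (4 ∣ m) with h | h
        · exact h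
        · exact absurd ⟨hp2, h⟩ h2
      have := HD_mod_dvd_int ha1 (ha4 h4m)
      exact_mod_cast this
    exact_mod_cast HD_pow_dvd p hp k a px h4' d hSp

/-- Hull–Dobell theorem (full-period direction): if c is coprime to m, a ≡ 1 mod p
for every prime p dividing m, and a ≡ 1 mod 4 when 4 ∣ m, then the linear
congruential generator x ↦ a·x + c on ZMod m has full period: the orbit of any
starting point covers all of ZMod m. -/
theorem hull_dobell (m a c : ℕ) (hm : 1 ≤ m)
    (hc : Nat.Coprime c m)
    (ha : ∀ p : ℕ, p.Prime → p ∣ m → a % p = 1)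
    (ha4 : 4 ∣ m → a % 4 = 1) :
    ∀ x₀ : ZMod m,
      Function.Surjective (fun n : ℕ =>
        (fun s : ZMod m => (a : ZMod m) * s + (c : ZMod m))^[n] x₀) := by
  intro x₀
  rcases eq_or_lt_of_le hm with h1 | h1
  · haveI : Subsingleton (ZMod m) := by rw [← h1]; infer_instance
    exact fun y => ⟨0, Subsingleton.elim _ _⟩
  haveI : NeZero m := ⟨by omega⟩
  have ha1 : 1 ≤ a := by
    have hp := Nat.minFac_prime (by omega : m ≠ 1)
    have h := ha m.minFac hp m.minFac_dvd
    have := Nat.mod_le a m.minFac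
    omega
  set f : ZMod m → ZMod m := fun s => (a : ZMod m) * s + (c : ZMod m) with hf
  have hiter : ∀ (y : ZMod m) (n : ℕ),
      f^[n] y = (a : ZMod m) ^ n * y + (c : ZMod m) * ∑ i ∈ range n, (a : ZMod m) ^ i := by
    intro y n
    induction n with
    | zero => simp
    | succ n ih =>
      rw [Function.iterate_succ_apply', ih, geom_sum_succ, hf]
      ring
  have hunit : ∀ y : ZMod m, IsUnit ((a : ZMod m) * y - y + (c : ZMod m)) := by
    intro y
    have hw : (((a - 1) * (ZMod.val y) + c : ℕ) : ZMod m)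
        = (a : ZMod m) * y - y + (c : ZMod m) := by
      push_cast [Nat.cast_sub ha1, ZMod.natCast_val, ZMod.cast_id]
      ring
    rw [← hw, ZMod.isUnit_iff_coprime]
    by_contra hnc
    obtain ⟨q, hq, hq1, hq2⟩ := Nat.Prime.not_coprime_iff_dvd.mp hnc
    have hqa : q ∣ a - 1 := HD_mod_dvd (ha q hq hq2)
    have hqc : q ∣ c := by
      have h := Nat.dvd_sub hq1 (Dvd.dvd.mul_right hqa (ZMod.val y))
      simpa [Nat.add_sub_cancel_left] using h
    have hgcd : q ∣ Nat.gcd c m := Nat.dvd_gcd hqc hq2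
    rw [hc] at hgcd
    exact hq.one_lt.ne' (Nat.dvd_one.mp hgcd)
  have hkey : ∀ (y : ZMod m) (d : ℕ), f^[d] y = y → m ∣ d := by
    intro y d hdy
    have hgeo := geom_sum_mul (a : ZMod m) d
    have h0 : (∑ i ∈ range d, (a : ZMod m) ^ i) * ((a : ZMod m) * y - y + c) = 0 := by
      have heq : f^[d] y - y
          = (∑ i ∈ range d, (a : ZMod m) ^ i) * ((a : ZMod m) * y - y + c) := by
        rw [hiter]
        have hpow : (a : ZMod m) ^ d = (∑ i ∈ range d, (a : ZMod m) ^ i) * ((a : ZMod m) - 1) + 1 := by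
          rw [hgeo]; ring
        rw [hpow]; ring
      rw [hdy, sub_self] at heq
      exact heq.symm
    have hT0 : (∑ i ∈ range d, (a : ZMod m) ^ i) = 0 :=
      ((hunit y).mul_left_eq_zero).mp h0
    have hcast : ((∑ i ∈ range d, (a : ℤ) ^ i : ℤ) : ZMod m) = 0 := by
      push_cast
      exact hT0
    exact HD_m_dvd m a ha ha4 ha1 d ((ZMod.intCast_zmod_eq_zero_iff_dvd _ m).mp hcast)
  have hinj : Function.Injective (fun n : Fin m => f^[(n : ℕ)] x₀) := by
    have key : ∀ i j : Fin m, i ≤ j → f^[(i : ℕ)] x₀ = f^[(j : ℕ)] x₀ → i = j := by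
      intro i j hle hij
      have hsplit : f^[(j : ℕ) - (i : ℕ)] (f^[(i : ℕ)] x₀) = f^[(i : ℕ)] x₀ := by
        rw [← Function.iterate_add_apply, Nat.sub_add_cancel hle, ← hij]
      have hdvd := hkey _ _ hsplit
      have hlt : (j : ℕ) - (i : ℕ) < m := lt_of_le_of_lt (Nat.sub_le _ _) j.isLt
      have hz : (j : ℕ) - (i : ℕ) = 0 := by
        rcases Nat.eq_zero_or_pos ((j : ℕ) - (i : ℕ)) with h | h
        · exact h
        · exact absurd hlt (not_lt.mpr (Nat.le_of_dvd h hdvd))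
      have : (i : ℕ) = (j : ℕ) := by
        have := Fin.le_iff_val_le_val.mp hle
        omega
      exact Fin.ext this
    intro i j hij
    simp only at hij
    rcases le_total i j with h | h
    · exact key i j h hij
    · exact (key j i h hij.symm).symm
  have hbij : Function.Bijective (fun n : Fin m => f^[(n : ℕ)] x₀) :=
    (Fintype.bijective_iff_injective_and_card _).mpr ⟨hinj, by simp [ZMod.card]⟩
  intro y
  obtain ⟨k, hk⟩ := hbij.2 y
  exact ⟨(k : ℕ), hk⟩
end

section
/- The Good–Turing total-probability identity: if a sample of size N is drawn i.i.d. from a distribution p on a finite alphabet, then the expected total probability mass of species observed exactly r times satisfies E[Σ_a p(a)·1{count(a)=r}] = ((r+1)/(N+1)) · E'[number of species appearing r+1 times in a sample of size N+1]. -/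
open MeasureTheory

section Aux

variable {α : Type*} [Fintype α] [DecidableEq α] [MeasurableSpace α]
    [MeasurableSingletonClass α]

/-- weight of a tuple -/
noncomputable def gtW (p : PMF α) {n : ℕ} (x : Fin n → α) : ℝ := ∏ i, (p (x i)).toReal

/-- count of letter a in tuple x -/
def gtC (a : α) {n : ℕ} (x : Fin n → α) : ℕ :=
  (Finset.univ.filter fun i => x i = a).card

lemma gtC_eq_sum (a : α) {n : ℕ} (x : Fin n → α) :
    gtC a x = ∑ i, if x i = a then 1 else 0 := by
  rw [gtC, Finset.card_filter]

lemma integral_eq_sum_gtW (p : PMF α) (n : ℕ) (f : (Fin n → α) → ℝ) :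
    ∫ x, f x ∂(Measure.pi fun _ : Fin n => p.toMeasure) =
      ∑ x : Fin n → α, gtW p x * f x := by
  rw [integral_fintype (Integrable.of_finite)]
  refine Finset.sum_congr rfl fun x _ => ?_
  rw [smul_eq_mul]
  congr 1
  rw [measureReal_def, ← Set.univ_pi_singleton x, Measure.pi_pi, ENNReal.toReal_prod, gtW]
  exact Finset.prod_congr rfl fun i _ => by
    rw [PMF.toMeasure_apply_singleton _ _ (measurableSet_singleton _)]

lemma gtW_snoc (p : PMF α) {n : ℕ} (y : Fin n → α) (b : α) :
    gtW p (Fin.snoc y b) = gtW p y * (p b).toReal := by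
  simp [gtW, Fin.prod_univ_castSucc]

lemma gtC_snoc (a : α) {n : ℕ} (y : Fin n → α) (b : α) :
    gtC a (Fin.snoc y b : Fin (n + 1) → α) = gtC a y + if b = a then 1 else 0 := by
  rw [gtC_eq_sum, gtC_eq_sum, Fin.sum_univ_castSucc]
  simp only [Fin.snoc_castSucc, Fin.snoc_last]

lemma sum_snoc (p : PMF α) {n : ℕ} (F : (Fin (n + 1) → α) → ℝ) :
    ∑ x : Fin (n + 1) → α, F x = ∑ b : α, ∑ y : Fin n → α, F (Fin.snoc y b) := by
  rw [← Equiv.sum_comp (Fin.insertNthEquiv (fun _ => α) (Fin.last n)) F,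
    Fintype.sum_prod_type]
  refine Finset.sum_congr rfl fun b _ => Finset.sum_congr rfl fun y _ => ?_
  congr 1
  exact Fin.insertNth_last' b y

lemma sum_p_toReal (p : PMF α) : ∑ b : α, (p b).toReal = 1 := by
  have h : ∑ b : α, p b = 1 := by
    rw [← tsum_fintype (L := .unconditional _)]; exact p.tsum_coe
  have := congrArg ENNReal.toReal h
  rwa [ENNReal.toReal_sum (fun b _ => p.apply_ne_top b)] at this

/-- symmetry: swapping a coordinate with the last one -/
lemma sum_swap_coord (p : PMF α) (a : α) (n r : ℕ) (j : Fin (n + 1)) :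
    ∑ x : Fin (n + 1) → α,
        gtW p x * ((if gtC a x = r + 1 then (1:ℝ) else 0) * (if x j = a then 1 else 0)) =
      ∑ x : Fin (n + 1) → α,
        gtW p x * ((if gtC a x = r + 1 then (1:ℝ) else 0) *
          (if x (Fin.last n) = a then 1 else 0)) := by
  set σ := Equiv.swap j (Fin.last n)
  have hbij : Function.Bijective (fun x : Fin (n + 1) → α => x ∘ σ) :=
    (Equiv.arrowCongr σ.symm (Equiv.refl α)).bijective
  refine Fintype.sum_bijective _ hbij _ _ fun x => ?_
  have hW : gtW p (x ∘ σ) = gtW p x := by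
    unfold gtW
    exact Equiv.prod_comp σ fun i => (p (x i)).toReal
  have hC : gtC a (x ∘ σ) = gtC a x := by
    rw [gtC_eq_sum, gtC_eq_sum]
    exact Equiv.sum_comp σ fun i => if x i = a then 1 else 0
  rw [hW, hC]
  simp only [Function.comp_apply, Function.comp, σ, Equiv.swap_apply_right]

/-- the per-letter core identity -/
lemma core_identity (p : PMF α) (a : α) (N r : ℕ) :
    ((N : ℝ) + 1) * ((p a).toReal *
        ∑ y : Fin N → α, gtW p y * (if gtC a y = r then (1:ℝ) else 0)) =
      ((r : ℝ) + 1) *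
        ∑ x : Fin (N + 1) → α, gtW p x * (if gtC a x = r + 1 then (1:ℝ) else 0) := by
  have key : ∀ x : Fin (N + 1) → α,
      ((r : ℝ) + 1) * (gtW p x * (if gtC a x = r + 1 then (1:ℝ) else 0)) =
        ∑ j : Fin (N + 1), gtW p x *
          ((if gtC a x = r + 1 then (1:ℝ) else 0) * (if x j = a then 1 else 0)) := by
    intro x
    by_cases h : gtC a x = r + 1
    · have hc : ∑ j : Fin (N + 1), (if x j = a then (1:ℝ) else 0) = (r : ℝ) + 1 := by
        have hn := gtC_eq_sum a x
        rw [h] at hn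
        have h2 : ((r + 1 : ℕ) : ℝ) = ((∑ i, if x i = a then 1 else 0 : ℕ) : ℝ) :=
          congrArg _ hn
        push_cast at h2
        exact h2.symm
      simp only [h, if_pos rfl, mul_one, ← Finset.mul_sum, hc]
      ring
    · simp [h]
  have step1 : ((r : ℝ) + 1) *
      ∑ x : Fin (N + 1) → α, gtW p x * (if gtC a x = r + 1 then (1:ℝ) else 0) =
      ∑ j : Fin (N + 1), ∑ x : Fin (N + 1) → α, gtW p x *
        ((if gtC a x = r + 1 then (1:ℝ) else 0) * (if x j = a then 1 else 0)) := by
    rw [Finset.mul_sum, Finset.sum_comm]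
    exact Finset.sum_congr rfl fun x _ => key x
  have step2 : ∀ j : Fin (N + 1), ∑ x : Fin (N + 1) → α, gtW p x *
      ((if gtC a x = r + 1 then (1:ℝ) else 0) * (if x j = a then 1 else 0)) =
      (p a).toReal * ∑ y : Fin N → α, gtW p y * (if gtC a y = r then (1:ℝ) else 0) := by
    intro j
    rw [sum_swap_coord p a N r j, sum_snoc p]
    rw [Finset.sum_eq_single a]
    · rw [Finset.mul_sum]
      refine Finset.sum_congr rfl fun y _ => ?_
      rw [gtW_snoc, gtC_snoc]
      have hl : (Fin.snoc y a : Fin (N + 1) → α) (Fin.last N) = a := by simp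
      rw [hl, if_pos rfl]
      simp only [if_pos rfl, mul_one]
      by_cases h : gtC a y = r
      · simp [h]; ring
      · have : ¬ (gtC a y + 1 = r + 1) := by omega
        simp [h, this]
    · intro b _ hb
      refine Finset.sum_eq_zero fun y _ => ?_
      have hl : (Fin.snoc y b : Fin (N + 1) → α) (Fin.last N) = b := by simp
      rw [hl, if_neg hb]
      ring
    · intro h; exact absurd (Finset.mem_univ a) h
  rw [step1]
  rw [Finset.sum_congr rfl fun j _ => step2 j]
  rw [Finset.sum_const, Finset.card_univ, Fintype.card_fin, nsmul_eq_mul]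
  push_cast
  ring

end Aux

/-- The Good–Turing identity: for an i.i.d. sample of size N+1 from a distribution p
on a finite alphabet (whose first N coordinates form the size-N sample), the expected
total probability mass of letters seen exactly r times in the size-N sample equals
(r+1)/(N+1) times the expected number of letters seen exactly r+1 times in the
size-(N+1) sample. -/
theorem good_turing {α : Type*} [Fintype α] [DecidableEq α] [MeasurableSpace α]
    [MeasurableSingletonClass α] (p : PMF α) (N r : ℕ) :
    (∫ x : Fin (N + 1) → α,
        (∑ a : α, (p a).toReal *
          (if (Finset.univ.filter fun i : Fin N => x i.castSucc = a).card = r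
            then (1 : ℝ) else 0))
        ∂(Measure.pi fun _ : Fin (N + 1) => p.toMeasure)) =
      ((r + 1 : ℝ) / (N + 1 : ℝ)) *
        ∫ x : Fin (N + 1) → α,
          ((Finset.univ.filter fun a : α =>
              (Finset.univ.filter fun i : Fin (N + 1) => x i = a).card = r + 1).card : ℝ)
          ∂(Measure.pi fun _ : Fin (N + 1) => p.toMeasure) := by
  rw [integral_eq_sum_gtW, integral_eq_sum_gtW]
  -- rewrite LHS integrand counts as gtC of x ∘ castSucc
  have hL : ∑ x : Fin (N + 1) → α, gtW p x *
      ∑ a : α, (p a).toReal *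
        (if (Finset.univ.filter fun i : Fin N => x i.castSucc = a).card = r
          then (1 : ℝ) else 0) =
      ∑ a : α, (p a).toReal *
        ∑ y : Fin N → α, gtW p y * (if gtC a y = r then (1:ℝ) else 0) := by
    have step : ∀ x : Fin (N + 1) → α, gtW p x * ∑ a : α, (p a).toReal *
        (if (Finset.univ.filter fun i : Fin N => x i.castSucc = a).card = r
          then (1 : ℝ) else 0) =
        ∑ a : α, gtW p x * ((p a).toReal *
          (if (Finset.univ.filter fun i : Fin N => x i.castSucc = a).card = r
            then (1 : ℝ) else 0)) := fun x => Finset.mul_sum _ _ _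
    rw [Finset.sum_congr rfl fun x _ => step x, Finset.sum_comm]
    refine Finset.sum_congr rfl fun a _ => ?_
    rw [sum_snoc p (fun x => gtW p x * ((p a).toReal *
      (if (Finset.univ.filter fun i : Fin N => x i.castSucc = a).card = r
          then (1 : ℝ) else 0)))]
    have key : ∀ b : α, ∀ y : Fin N → α,
        gtW p (Fin.snoc y b : Fin (N + 1) → α) * ((p a).toReal *
          (if (Finset.univ.filter fun i : Fin N =>
              (Fin.snoc y b : Fin (N + 1) → α) i.castSucc = a).card = r
            then (1 : ℝ) else 0)) =
        (p b).toReal * ((p a).toReal *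
          (gtW p y * (if gtC a y = r then (1:ℝ) else 0))) := by
      intro b y
      have hfilter : (Finset.univ.filter fun i : Fin N =>
          (Fin.snoc y b : Fin (N + 1) → α) i.castSucc = a) =
          (Finset.univ.filter fun i : Fin N => y i = a) := by
        refine Finset.filter_congr fun i _ => ?_
        rw [Fin.snoc_castSucc]
      rw [hfilter, gtW_snoc]
      show (gtW p y * (p b).toReal) * ((p a).toReal * (if gtC a y = r then (1:ℝ) else 0)) = _
      ring
    calc ∑ b : α, ∑ y : Fin N → α, gtW p (Fin.snoc y b) * ((p a).toReal *
          (if (Finset.univ.filter fun i : Fin N =>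
              (Fin.snoc y b : Fin (N + 1) → α) i.castSucc = a).card = r
            then (1 : ℝ) else 0))
        = ∑ b : α, (p b).toReal * ((p a).toReal *
            ∑ y : Fin N → α, gtW p y * (if gtC a y = r then (1:ℝ) else 0)) := by
          refine Finset.sum_congr rfl fun b _ => ?_
          rw [Finset.mul_sum, Finset.mul_sum]
          exact Finset.sum_congr rfl fun y _ => key b y
      _ = (∑ b : α, (p b).toReal) * ((p a).toReal *
            ∑ y : Fin N → α, gtW p y * (if gtC a y = r then (1:ℝ) else 0)) := by
          rw [Finset.sum_mul]
      _ = _ := by rw [sum_p_toReal p, one_mul]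
  rw [hL]
  -- rewrite RHS integrand card as a sum of indicators
  have hR : ∑ x : Fin (N + 1) → α, gtW p x *
      ((Finset.univ.filter fun a : α =>
          (Finset.univ.filter fun i : Fin (N + 1) => x i = a).card = r + 1).card : ℝ) =
      ∑ a : α, ∑ x : Fin (N + 1) → α, gtW p x * (if gtC a x = r + 1 then (1:ℝ) else 0) := by
    rw [Finset.sum_comm]
    refine Finset.sum_congr rfl fun x _ => ?_
    rw [← Finset.mul_sum]
    congr 1
    rw [Finset.card_filter]
    push_cast
    exact Finset.sum_congr rfl fun a _ => rfl
  rw [hR, Finset.mul_sum]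
  refine Finset.sum_congr rfl fun a _ => ?_
  have hNpos : ((N : ℝ) + 1) ≠ 0 := by positivity
  have h := core_identity p a N r
  rw [div_mul_eq_mul_div, eq_div_iff hNpos]
  linear_combination h
end
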